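/- arXiv:2507.07513 — 2 statements merged into one kernel-verified Lean document; each statement's English description precedes it below -/
import Mathlib

section
/- Let V be a finite-dimensional real inner product space, let J : V → V be a linear map satisfying J∘J = −id and ⟨Jx, Jy⟩ = ⟨x, y⟩ for all x, y ∈ V (an orthogonal complex structure), and let H : V → V be a self-adjoint linear map that anticommutes with J, i.e. H∘J = −J∘H. Then for every unit vector v ∈ V and every orthonormal basis (e₁, …, e_d) of V one has 2‖Hv‖² ≤ Σᵢ ‖Heᵢ‖², i.e. the squared Hilbert–Schmidt norm of H is at least 2‖Hv‖². -/
/-!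
The squared Hilbert–Schmidt norm `∑ i, ‖T (e i)‖ ^ 2` is the trace of `T† T`, so it does not depend
on the orthonormal basis and, by Bessel's inequality, dominates `∑ k, ‖T (u k)‖ ^ 2` for every
orthonormal family `u`. For an orthogonal complex structure `J` and a unit vector `v`, the pair
`v, J v` is orthonormal, and if `H` anticommutes with `J` then `‖H (J v)‖ = ‖J (H v)‖ = ‖H v‖`.
-/

open InnerProductSpace

namespace LinearMap

variable {𝕜 E F ι : Type*} [RCLike 𝕜] [Fintype ι]
  [NormedAddCommGroup E] [InnerProductSpace 𝕜 E] [FiniteDimensional 𝕜 E]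
  [NormedAddCommGroup F] [InnerProductSpace 𝕜 F] [FiniteDimensional 𝕜 F]

lemma sum_norm_sq_apply_eq_trace_adjoint_comp_self (T : E →ₗ[𝕜] F)
    (b : OrthonormalBasis ι 𝕜 E) :
    ((∑ i, ‖T (b i)‖ ^ 2 : ℝ) : 𝕜) = (adjoint T ∘ₗ T).trace 𝕜 E := by
  simp only [trace_eq_sum_inner _ b, comp_apply, adjoint_inner_right,
    inner_self_eq_norm_sq_to_K, RCLike.ofReal_sum, RCLike.ofReal_pow]

lemma sum_norm_sq_adjoint_apply_eq {ι' : Type*} [Fintype ι'] (T : E →ₗ[𝕜] F)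
    (b : OrthonormalBasis ι 𝕜 E) (c : OrthonormalBasis ι' 𝕜 F) :
    ∑ j, ‖adjoint T (c j)‖ ^ 2 = ∑ i, ‖T (b i)‖ ^ 2 := by
  apply RCLike.ofReal_injective (K := 𝕜)
  rw [sum_norm_sq_apply_eq_trace_adjoint_comp_self, sum_norm_sq_apply_eq_trace_adjoint_comp_self,
    adjoint_adjoint, trace_comp_comm']

lemma sum_norm_sq_apply_le_of_orthonormal {κ : Type*} [Fintype κ] (T : E →ₗ[𝕜] F)
    {u : κ → E} (hu : Orthonormal 𝕜 u) (b : OrthonormalBasis ι 𝕜 E) :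
    ∑ k, ‖T (u k)‖ ^ 2 ≤ ∑ i, ‖T (b i)‖ ^ 2 := by
  let c := stdOrthonormalBasis 𝕜 F
  calc ∑ k, ‖T (u k)‖ ^ 2 = ∑ j, ∑ k, ‖⟪u k, adjoint T (c j)⟫_𝕜‖ ^ 2 := by
        simp_rw [adjoint_inner_right, ← c.sum_sq_norm_inner_left]
        exact Finset.sum_comm
    _ ≤ ∑ j, ‖adjoint T (c j)‖ ^ 2 := Finset.sum_le_sum fun j _ ↦ hu.sum_inner_products_le _
    _ = ∑ i, ‖T (b i)‖ ^ 2 := sum_norm_sq_adjoint_apply_eq T b c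

end LinearMap

open RealInnerProductSpace

section ComplexStructure

variable {V : Type*} [NormedAddCommGroup V] [InnerProductSpace ℝ V] {J : V →ₗ[ℝ] V}

lemma real_inner_self_apply_eq_zero_of_comp_self_eq_neg_id (hJ2 : J ∘ₗ J = -LinearMap.id)
    (hJO : ∀ x y : V, ⟪J x, J y⟫ = ⟪x, y⟫) (x : V) :
    ⟪x, J x⟫ = 0 := by
  have h := hJO x (J x)
  rw [← LinearMap.comp_apply, hJ2, LinearMap.neg_apply, LinearMap.id_apply, inner_neg_right,
    real_inner_comm] at h
  linarith

lemma orthonormal_vecCons_self_apply_of_comp_self_eq_neg_id (hJ2 : J ∘ₗ J = -LinearMap.id)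
    (hJO : ∀ x y : V, ⟪J x, J y⟫ = ⟪x, y⟫) {v : V} (hv : ‖v‖ = 1) :
    Orthonormal ℝ ![v, J v] := by
  have hJv : ‖J v‖ = 1 := ((J.isometryOfInner hJO).norm_map v).trans hv
  have hvJv := real_inner_self_apply_eq_zero_of_comp_self_eq_neg_id hJ2 hJO v
  rw [orthonormal_iff_ite]
  simp [Fin.forall_fin_two, hv, hJv, hvJv, real_inner_comm v]

end ComplexStructure

theorem hilbert_schmidt_bound_of_anticommuting_complex_structure_general
    {V : Type*} [NormedAddCommGroup V] [InnerProductSpace ℝ V]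
    [FiniteDimensional ℝ V]
    (J H : V →ₗ[ℝ] V)
    (hJ2 : J ∘ₗ J = -LinearMap.id)
    (hJO : ∀ x y : V, ⟪J x, J y⟫ = ⟪x, y⟫)
    (hHJ : H ∘ₗ J = -(J ∘ₗ H))
    (v : V) (hv : ‖v‖ = 1)
    {ι : Type*} [Fintype ι] (e : OrthonormalBasis ι ℝ V) :
    2 * ‖H v‖ ^ 2 ≤ ∑ i, ‖H (e i)‖ ^ 2 := by
  have hHJv : ‖H (J v)‖ = ‖H v‖ := by
    rw [← LinearMap.comp_apply, hHJ, LinearMap.neg_apply, norm_neg, LinearMap.comp_apply]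
    exact (J.isometryOfInner hJO).norm_map (H v)
  calc 2 * ‖H v‖ ^ 2 = ∑ k, ‖H (![v, J v] k)‖ ^ 2 := by
        simp only [Fin.sum_univ_two, Matrix.cons_val_zero, Matrix.cons_val_one, hHJv]
        ring
    _ ≤ ∑ i, ‖H (e i)‖ ^ 2 := H.sum_norm_sq_apply_le_of_orthonormal
        (orthonormal_vecCons_self_apply_of_comp_self_eq_neg_id hJ2 hJO hv) e

theorem hilbert_schmidt_bound_of_anticommuting_complex_structure
    {V : Type*} [NormedAddCommGroup V] [InnerProductSpace ℝ V]
    [FiniteDimensional ℝ V]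
    (J H : V →ₗ[ℝ] V)
    (hJ2 : J ∘ₗ J = -LinearMap.id)
    (hJO : ∀ x y : V, ⟪J x, J y⟫ = ⟪x, y⟫)
    (hHsym : ∀ x y : V, ⟪H x, y⟫ = ⟪x, H y⟫)
    (hHJ : H ∘ₗ J = -(J ∘ₗ H))
    (v : V) (hv : ‖v‖ = 1)
    {ι : Type*} [Fintype ι] (e : OrthonormalBasis ι ℝ V) :
    2 * ‖H v‖ ^ 2 ≤ ∑ i, ‖H (e i)‖ ^ 2 :=
  hilbert_schmidt_bound_of_anticommuting_complex_structure_general J H hJ2 hJO hHJ v hv e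
end

section
/- Let n ≥ 1 and let f : ℂⁿ → ℂ be holomorphic (complex differentiable at every point). Define u : ℂⁿ → ℝ by u(z) = Re(f(z)), regarded as a smooth function on the underlying real 2n-dimensional inner product space of ℂⁿ (with inner product ⟨X, Y⟩ = Re⟨X, Y⟩_ℂ), and let ∇u denote its gradient. Then at every point x with ∇u(x) ≠ 0, the function y ↦ ‖∇u(y)‖ is differentiable at x and ‖∇‖∇u‖(x)‖² ≤ (1/2) Σ_{i,j} (D²u(x)(eᵢ, eⱼ))², where D²u(x) is the second Fréchet derivative of u over ℝ and (e₁, …, e_{2n}) is any orthonormal basis of ℂⁿ over ℝ. -/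
open RealInnerProductSpace

/-- The underlying real inner product space structure of `ℂⁿ`,
with inner product `⟨X, Y⟩ = Re ⟨X, Y⟩_ℂ`. -/
noncomputable instance EuclideanSpace.realInnerProductSpace {n : ℕ} :
    InnerProductSpace ℝ (EuclideanSpace ℂ (Fin n)) :=
  InnerProductSpace.rclikeToReal ℂ _


open Complex Metric intervalIntegral Real


open Complex Metric intervalIntegral Real

variable {n : ℕ}

local notation "E" => EuclideanSpace ℂ (Fin n)

noncomputable local instance : MeasurableSpace (EuclideanSpace ℂ (Fin n)) := borel _
local instance : BorelSpace (EuclideanSpace ℂ (Fin n)) := ⟨rfl⟩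

set_option synthInstance.maxHeartbeats 1000000
set_option maxHeartbeats 1000000

lemma slice_hasDerivAt {f : E → ℂ} (hf : Differentiable ℂ f)
    (y v : E) (t : ℂ) :
    HasDerivAt (fun s : ℂ => f (y + s • v)) (fderiv ℂ f (y + t • v) v) t := by
  have base : HasDerivAt (fun s : ℂ => y + s • v) v t := by
    simpa using ((hasDerivAt_id t).smul_const v).const_add y
  exact (hf (y + t • v)).hasFDerivAt.comp_hasDerivAt t base

lemma fderiv_norm_bound {f : E → ℂ} (hf : Differentiable ℂ f) (x : E) (r : ℝ) :
    ∃ M : ℝ, 0 ≤ M ∧ ∀ y ∈ closedBall x r, ‖fderiv ℂ f y‖ ≤ M := by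
  obtain ⟨C, hC⟩ := (isCompact_closedBall x (r + 1)).exists_bound_of_continuousOn
    hf.continuous.continuousOn
  refine ⟨max C 0, le_max_right _ _, fun y hy => ?_⟩
  refine ContinuousLinearMap.opNorm_le_bound _ (le_max_right _ _) fun v => ?_
  rcases eq_or_ne v 0 with rfl | hv
  · simp
  · set w : E := (‖v‖ : ℂ)⁻¹ • v with hw
    have hnw : ‖w‖ = 1 := by
      rw [hw, norm_smul]
      simp [norm_inv, hv]
    have hd0 : HasDerivAt (fun s : ℂ => f (y + s • w)) (fderiv ℂ f y w) 0 := by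
      simpa using slice_hasDerivAt hf y w 0
    have hde : deriv (fun s : ℂ => f (y + s • w)) 0 = fderiv ℂ f y w := hd0.deriv
    have hbd : ‖deriv (fun s : ℂ => f (y + s • w)) 0‖ ≤ C / 1 := by
      apply norm_deriv_le_of_forall_mem_sphere_norm_le one_pos
      · exact ((hf.comp ((differentiable_id.smul_const w).const_add y))).diffContOnCl
      · intro z hz
        apply hC
        have : ‖y + z • w - x‖ ≤ r + 1 := by
          have h1 : ‖y - x‖ ≤ r := mem_closedBall_iff_norm.mp hy
          have h2 : ‖z • w‖ = 1 := by
            rw [norm_smul, hnw, mem_sphere_zero_iff_norm.mp hz]; ring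
          calc ‖y + z • w - x‖ = ‖(y - x) + z • w‖ := by rw [add_sub_right_comm]
            _ ≤ ‖y - x‖ + ‖z • w‖ := norm_add_le _ _
            _ ≤ r + 1 := by rw [h2]; linarith
        exact mem_closedBall_iff_norm.mpr this
    have hvw : fderiv ℂ f y v = (‖v‖ : ℂ) • fderiv ℂ f y w := by
      rw [hw, map_smul]
      rw [smul_smul]
      rw [mul_inv_cancel₀ (by exact_mod_cast norm_ne_zero_iff.mpr hv), one_smul]
    rw [hvw, norm_smul]
    simp only [Complex.norm_real, norm_norm]
    have : ‖fderiv ℂ f y w‖ ≤ C := by rw [← hde]; simpa using hbd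
    calc ‖v‖ * ‖fderiv ℂ f y w‖ ≤ ‖v‖ * C := by
          exact mul_le_mul_of_nonneg_left this (norm_nonneg v)
      _ ≤ max C 0 * ‖v‖ := by
          rw [mul_comm]
          exact mul_le_mul_of_nonneg_right (le_max_left _ _) (norm_nonneg v)


/-- Cauchy-type representation of the directional derivative. -/
lemma fderiv_apply_rep {f : E → ℂ} (hf : Differentiable ℂ f) (y v : E) :
    fderiv ℂ f y v = (2 * π * I : ℂ)⁻¹ •
      ∫ θ in (0:ℝ)..2 * π, deriv (circleMap 0 1) θ •
        (1 / circleMap 0 1 θ) • (circleMap 0 1 θ)⁻¹ • f (y + circleMap 0 1 θ • v) := by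
  have hg : Differentiable ℂ (fun s : ℂ => f (y + s • v)) :=
    fun t => (slice_hasDerivAt hf y v t).differentiableAt
  have h1 : HasFPowerSeriesAt (fun s : ℂ => f (y + s • v))
      (cauchyPowerSeries (fun s : ℂ => f (y + s • v)) 0 1) 0 :=
    (hg.hasFPowerSeriesOnBall 0 one_pos).hasFPowerSeriesAt
  have h2 : deriv (fun s : ℂ => f (y + s • v)) 0 = fderiv ℂ f y v := by
    simpa using (slice_hasDerivAt hf y v 0).deriv
  rw [← h2, h1.deriv]
  have h3 := cauchyPowerSeries_apply (fun s : ℂ => f (y + s • v)) 0 1 1 1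
  rw [show (cauchyPowerSeries (fun s : ℂ => f (y + s • v)) 0 1 1 fun _ => 1)
      = (cauchyPowerSeries (fun s : ℂ => f (y + s • v)) 0 1 1 fun _ => (1:ℂ)) from rfl, h3]
  simp only [circleIntegral, sub_zero, pow_one]

lemma diff_fderiv_apply {f : E → ℂ} (hf : Differentiable ℂ f) (v x : E) :
    DifferentiableAt ℂ (fun y => fderiv ℂ f y v) x := by
  set c : ℝ → ℂ := circleMap 0 1 with hc
  have hcne : ∀ θ, c θ ≠ 0 := fun θ => circleMap_ne_center one_ne_zero
  have hcnorm : ∀ θ, ‖c θ‖ = 1 := fun θ => by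
    rw [hc, norm_circleMap_zero]; norm_num
  set a : ℝ → ℂ := fun θ => deriv (circleMap 0 1) θ * ((1 / c θ) * (c θ)⁻¹) with ha
  have hanorm : ∀ θ, ‖a θ‖ = 1 := by
    intro θ
    rw [ha]
    simp only [deriv_circleMap, norm_mul, norm_inv, norm_one, one_div, norm_I]
    rw [norm_circleMap_zero]
    simp [hcnorm θ]
  have hacont : Continuous a := by
    have h1 : Continuous (fun θ => deriv (circleMap 0 1) θ) := by
      simp only [deriv_circleMap]
      exact (continuous_circleMap 0 1).mul continuous_const
    exact h1.mul
      (((continuous_const.div (continuous_circleMap 0 1) hcne)).mul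
        ((continuous_circleMap 0 1).inv₀ hcne))
  set F : E → ℝ → ℂ := fun y θ => a θ • f (y + c θ • v) with hF
  set F' : E → ℝ → (E →L[ℂ] ℂ) := fun y θ => a θ • fderiv ℂ f (y + c θ • v) with hF'
  obtain ⟨M, hM0, hM⟩ := fderiv_norm_bound hf x (1 + ‖v‖)
  have key : HasFDerivAt (fun y => ∫ θ in (0:ℝ)..2 * π, F y θ)
      (∫ θ in (0:ℝ)..2 * π, F' x θ) x := by
    apply (intervalIntegral.hasFDerivAt_integral_of_dominated_of_fderiv_le
      (F := F) (F' := F') (bound := fun _ => M) (μ := MeasureTheory.volume)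
      (ball_mem_nhds x one_pos) ?_ ?_ ?_ ?_ ?_ ?_)
    · filter_upwards with y
      exact ((hacont.smul (hf.continuous.comp
        (continuous_const.add ((continuous_circleMap 0 1).smul continuous_const)))).aestronglyMeasurable)
    · exact (hacont.smul (hf.continuous.comp
        (continuous_const.add ((continuous_circleMap 0 1).smul continuous_const)))).intervalIntegrable 0 (2*π)
    · have mb : Measurable (fun θ => fderiv ℂ f (x + c θ • v)) :=
        (measurable_fderiv ℂ f).comp
          ((continuous_const.add ((continuous_circleMap 0 1).smul continuous_const)).measurable)
      exact hacont.aestronglyMeasurable.smul mb.aestronglyMeasurable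
    · filter_upwards with θ
      intro _ y hy
      rw [hF']
      simp only []
      refine le_trans (ContinuousLinearMap.opNorm_smul_le _ _) ?_
      rw [hanorm, one_mul]
      apply hM
      have : ‖y + c θ • v - x‖ ≤ 1 + ‖v‖ := by
        have h1 : ‖y - x‖ ≤ 1 := le_of_lt (mem_ball_iff_norm.mp hy)
        have h2 : ‖c θ • v‖ = ‖v‖ := by rw [norm_smul, hcnorm θ, one_mul]
        calc ‖y + c θ • v - x‖ = ‖(y - x) + c θ • v‖ := by rw [add_sub_right_comm]
          _ ≤ ‖y - x‖ + ‖c θ • v‖ := norm_add_le _ _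
          _ ≤ 1 + ‖v‖ := by rw [h2]; linarith
      exact mem_closedBall_iff_norm.mpr this
    · exact intervalIntegrable_const
    · filter_upwards with θ
      intro _ y hy
      have base : HasFDerivAt (fun z : EuclideanSpace ℂ (Fin n) => z + c θ • v)
          (ContinuousLinearMap.id ℂ (EuclideanSpace ℂ (Fin n))) y :=
        (hasFDerivAt_id y).add_const _
      have hcomp := ((hf (y + c θ • v)).hasFDerivAt.comp y base).const_smul (a θ)
      rw [ContinuousLinearMap.comp_id] at hcomp
      exact hcomp
  have heq : (fun y => fderiv ℂ f y v)
      = fun y => (2 * π * I : ℂ)⁻¹ • ∫ θ in (0:ℝ)..2 * π, F y θ := by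
    funext y
    rw [fderiv_apply_rep hf y v]
    congr 1
    apply intervalIntegral.integral_congr
    intro θ _
    rw [hF]
    simp only [smul_smul]
    rfl
  rw [heq]
  exact ((key.const_smul ((2 * π * I : ℂ)⁻¹)).differentiableAt)

lemma diff_fderiv {f : E → ℂ} (hf : Differentiable ℂ f) :
    Differentiable ℂ (fderiv ℂ f) := by
  intro x
  have hrep : (fderiv ℂ f : E → (E →L[ℂ] ℂ)) = fun y =>
      ∑ i : Fin n, (fderiv ℂ f y ((EuclideanSpace.basisFun (Fin n) ℂ) i)) •
        (EuclideanSpace.proj i : E →L[ℂ] ℂ) := by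
    funext y
    apply ContinuousLinearMap.ext
    intro z
    have hz : ∑ i, z i • (EuclideanSpace.basisFun (Fin n) ℂ) i = z := by
      simpa using (EuclideanSpace.basisFun (Fin n) ℂ).sum_repr z
    conv_lhs => rw [← hz]
    rw [map_sum]
    simp only [ContinuousLinearMap.sum_apply, ContinuousLinearMap.smul_apply, map_smul]
    congr 1
    funext i
    simp [mul_comm]
  rw [hrep]
  apply DifferentiableAt.fun_sum
  intro i _
  exact (diff_fderiv_apply hf _ x).smul_const _







lemma rie (x y : E) : ⟪x, y⟫ = (inner ℂ x y : ℂ).re := rfl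

lemma smul_I_inner (x y : E) : ⟪(Complex.I : ℂ) • x, y⟫ = -⟪x, (Complex.I : ℂ) • y⟫ := by
  rw [rie, rie, inner_smul_left, inner_smul_right]
  simp

lemma inner_I_self (x : E) : ⟪x, (Complex.I : ℂ) • x⟫ = 0 :=
  real_inner_I_smul_self (𝕜 := ℂ) x

/-- Two-vector Bessel inequality. -/
lemma bessel_two (v₁ v₂ w : E) (h1 : ‖v₁‖ = 1) (h2 : ‖v₂‖ = 1) (h12 : ⟪v₁, v₂⟫ = 0) :
    ⟪v₁, w⟫ ^ 2 + ⟪v₂, w⟫ ^ 2 ≤ ‖w‖ ^ 2 := by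
  have expand : ‖w - (⟪v₁, w⟫ • v₁ + ⟪v₂, w⟫ • v₂)‖ ^ 2
      = ‖w‖ ^ 2 - (⟪v₁, w⟫ ^ 2 + ⟪v₂, w⟫ ^ 2) := by
    rw [norm_sub_sq_real, inner_add_right, real_inner_smul_right, real_inner_smul_right,
        norm_add_sq_real, real_inner_smul_left, real_inner_smul_right, h12,
        norm_smul, norm_smul, h1, h2, real_inner_comm w v₁, real_inner_comm w v₂]
    simp only [Real.norm_eq_abs, mul_pow, _root_.sq_abs]
    ring
  nlinarith [sq_nonneg (‖w - (⟪v₁, w⟫ • v₁ + ⟪v₂, w⟫ • v₂)‖)]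

/-- Hilbert–Schmidt bound for two orthonormal vectors. -/
lemma hs_ineq {ι : Type} [Fintype ι] (e : OrthonormalBasis ι ℝ E)
    (T : E →L[ℝ] E) (v₁ v₂ : E) (h1 : ‖v₁‖ = 1) (h2 : ‖v₂‖ = 1) (h12 : ⟪v₁, v₂⟫ = 0) :
    ‖T v₁‖ ^ 2 + ‖T v₂‖ ^ 2 ≤ ∑ i, ∑ j, ⟪T (e i), e j⟫ ^ 2 := by
  set S := ContinuousLinearMap.adjoint T with hS
  have parseval : ∀ w : E, ‖w‖ ^ 2 = ∑ j, ⟪w, e j⟫ ^ 2 := by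
    intro w
    have := e.sum_inner_mul_inner w w
    rw [← real_inner_self_eq_norm_sq]
    rw [← this]
    congr 1
    funext j
    rw [real_inner_comm (e j) w]
    ring
  have step1 : ∀ w : E, ‖T w‖ ^ 2 = ∑ j, ⟪w, S (e j)⟫ ^ 2 := by
    intro w
    rw [parseval (T w)]
    congr 1
    funext j
    rw [← ContinuousLinearMap.adjoint_inner_right T w (e j)]
  have step4 : ∑ j, ‖S (e j)‖ ^ 2 = ∑ i, ∑ j, ⟪T (e i), e j⟫ ^ 2 := by
    rw [Finset.sum_comm]
    congr 1
    funext j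
    rw [parseval (S (e j))]
    congr 1
    funext i
    rw [ContinuousLinearMap.adjoint_inner_left T (e i) (e j), real_inner_comm]
  calc ‖T v₁‖ ^ 2 + ‖T v₂‖ ^ 2 = ∑ j, (⟪v₁, S (e j)⟫ ^ 2 + ⟪v₂, S (e j)⟫ ^ 2) := by
        rw [step1 v₁, step1 v₂, Finset.sum_add_distrib]
    _ ≤ ∑ j, ‖S (e j)‖ ^ 2 :=
        Finset.sum_le_sum fun j _ => bessel_two v₁ v₂ (S (e j)) h1 h2 h12
    _ = ∑ i, ∑ j, ⟪T (e i), e j⟫ ^ 2 := step4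



set_option maxHeartbeats 2000000 in
theorem refined_kato_for_real_parts_of_holomorphic
    {n : ℕ} (hn : 1 ≤ n)
    (f : EuclideanSpace ℂ (Fin n) → ℂ) (hf : Differentiable ℂ f)
    (u : EuclideanSpace ℂ (Fin n) → ℝ) (hu : u = fun z => (f z).re)
    (x : EuclideanSpace ℂ (Fin n)) (hx : gradient u x ≠ 0) :
    DifferentiableAt ℝ (fun y => ‖gradient u y‖) x ∧
      ∀ {ι : Type} [Fintype ι] (e : OrthonormalBasis ι ℝ (EuclideanSpace ℂ (Fin n))),
        ‖gradient (fun y => ‖gradient u y‖) x‖ ^ 2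
          ≤ (1 / 2) * ∑ i, ∑ j, (iteratedFDeriv ℝ 2 u x ![e i, e j]) ^ 2 := by
  have hg2 : Differentiable ℂ (fderiv ℂ f) := diff_fderiv hf
  set Fc : EuclideanSpace ℂ (Fin n) →L[ℂ] (EuclideanSpace ℂ (Fin n) →L[ℂ] ℂ) := fderiv ℂ (fderiv ℂ f) x with hFc
  have hgF : HasFDerivAt (fderiv ℂ f) Fc x := (hg2 x).hasFDerivAt
  set Φ : (EuclideanSpace ℂ (Fin n) →L[ℂ] ℂ) →L[ℝ] (EuclideanSpace ℂ (Fin n) →L[ℝ] ℝ) :=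
    ((ContinuousLinearMap.compL ℝ (EuclideanSpace ℂ (Fin n)) ℂ ℝ) Complex.reCLM).comp
      (ContinuousLinearMap.restrictScalarsL ℂ (EuclideanSpace ℂ (Fin n)) ℂ ℝ ℝ) with hΦdef
  have hu1 : ∀ y, HasFDerivAt u (Φ (fderiv ℂ f y)) y := by
    intro y
    have h1 := ((hf y).hasFDerivAt).restrictScalars ℝ
    have h2 := (Complex.reCLM.hasFDerivAt (x := f y)).comp y h1
    rw [hu]
    exact h2
  have hfdu : fderiv ℝ u = fun y => Φ (fderiv ℂ f y) := funext fun y => (hu1 y).fderiv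
  set L : ((EuclideanSpace ℂ (Fin n)) →L[ℝ] ℝ) ≃L[ℝ] EuclideanSpace ℂ (Fin n) :=
    (InnerProductSpace.toDual ℝ (EuclideanSpace ℂ (Fin n))).symm.toContinuousLinearEquiv with hL
  have hgradu : gradient u = fun y => L (Φ (fderiv ℂ f y)) := by
    funext y
    show (InnerProductSpace.toDual ℝ (EuclideanSpace ℂ (Fin n))).symm (fderiv ℝ u y) = _
    rw [hfdu]
    rfl
  set A : (EuclideanSpace ℂ (Fin n)) →L[ℝ] EuclideanSpace ℂ (Fin n) :=
    ((L : ((EuclideanSpace ℂ (Fin n)) →L[ℝ] ℝ) →L[ℝ] EuclideanSpace ℂ (Fin n)).comp Φ).comp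
      (Fc.restrictScalars ℝ) with hA
  have hAfd : HasFDerivAt (gradient u) A x := by
    rw [hgradu]
    exact ((L : ((EuclideanSpace ℂ (Fin n)) →L[ℝ] ℝ) →L[ℝ] EuclideanSpace ℂ (Fin n)).comp
      Φ).hasFDerivAt.comp x (hgF.restrictScalars ℝ)
  have key1 : ∀ v w : EuclideanSpace ℂ (Fin n), (inner ℂ (A v) w : ℂ) = Fc v w := by
    intro v w
    have hre : ∀ w' : EuclideanSpace ℂ (Fin n), ((inner ℂ (A v) w' : ℂ)).re = (Fc v w').re := by
      intro w'
      have h := @InnerProductSpace.toDual_symm_apply ℝ (EuclideanSpace ℂ (Fin n)) _ _ _ _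
        w' (Φ (Fc v))
      calc ((inner ℂ (A v) w' : ℂ)).re = ⟪A v, w'⟫ := (rie _ _).symm
        _ = (Fc v w').re := h
    apply Complex.ext
    · exact hre w
    · have h1 := hre ((Complex.I : ℂ) • w)
      rw [inner_smul_right] at h1
      have h2 : Fc v ((Complex.I : ℂ) • w) = Complex.I * Fc v w := by
        rw [map_smul]; rfl
      rw [h2] at h1
      simp only [Complex.mul_re, Complex.I_re, Complex.I_im, zero_mul, one_mul,
        zero_sub, neg_inj] at h1
      exact h1
  have keyinner : ∀ v w : EuclideanSpace ℂ (Fin n), ⟪A v, w⟫ = (Fc v w).re := by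
    intro v w
    rw [rie, key1]
  have hAanti : ∀ v : EuclideanSpace ℂ (Fin n), A ((Complex.I : ℂ) • v) = -((Complex.I : ℂ) • A v) := by
    intro v
    apply ext_inner_right ℂ
    intro w
    rw [key1, map_smul, inner_neg_left, inner_smul_left, key1]
    simp only [Complex.conj_I, ContinuousLinearMap.smul_apply, smul_eq_mul]
    ring
  set B := ContinuousLinearMap.adjoint A with hB
  have hBanti : ∀ w : EuclideanSpace ℂ (Fin n), B ((Complex.I : ℂ) • w) = -((Complex.I : ℂ) • B w) := by
    intro w
    apply ext_inner_right ℝ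
    intro z
    rw [hB, ContinuousLinearMap.adjoint_inner_left, smul_I_inner]
    have h3 : (Complex.I : ℂ) • A z = -(A ((Complex.I : ℂ) • z)) := by rw [hAanti z]; simp
    rw [h3, inner_neg_right, neg_neg, ← ContinuousLinearMap.adjoint_inner_left A,
      inner_neg_left, smul_I_inner, neg_neg]
  have hGn : ‖gradient u x‖ ≠ 0 := norm_ne_zero_iff.mpr hx
  set v₀ : EuclideanSpace ℂ (Fin n) := ‖gradient u x‖⁻¹ • gradient u x with hv₀
  have hv₀n : ‖v₀‖ = 1 := by
    rw [hv₀, norm_smul]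
    simp [hGn]
  set v₁ : EuclideanSpace ℂ (Fin n) := (Complex.I : ℂ) • v₀ with hv₁
  have hv₁n : ‖v₁‖ = 1 := by rw [hv₁, norm_smul, Complex.norm_I, one_mul, hv₀n]
  have hv01 : ⟪v₀, v₁⟫ = 0 := inner_I_self v₀
  have hnormdiff : DifferentiableAt ℝ (fun y => ‖gradient u y‖) x :=
    hAfd.differentiableAt.norm ℝ hx
  have hGG : ⟪gradient u x, gradient u x⟫ = ‖gradient u x‖ * ‖gradient u x‖ :=
    real_inner_self_eq_norm_mul_norm _
  have hGradAt : HasGradientAt (fun y => ‖gradient u y‖) (B v₀) x := by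
    rw [hasGradientAt_iff_hasFDerivAt]
    have hinner : HasFDerivAt (fun y => ⟪gradient u y, gradient u y⟫)
        ((fderivInnerCLM ℝ (gradient u x, gradient u x)).comp (A.prod A)) x :=
      hAfd.inner ℝ hAfd
    have hGGne : ⟪gradient u x, gradient u x⟫ ≠ 0 := by
      rw [hGG]
      exact mul_ne_zero hGn hGn
    have hs : HasDerivAt Real.sqrt (1 / (2 * Real.sqrt ⟪gradient u x, gradient u x⟫))
        ⟪gradient u x, gradient u x⟫ := Real.hasDerivAt_sqrt hGGne
    have hcomp := hs.comp_hasFDerivAt x hinner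
    have hfun : (fun y => Real.sqrt ⟪gradient u y, gradient u y⟫)
        = fun y => ‖gradient u y‖ := by
      funext y
      rw [real_inner_self_eq_norm_mul_norm, Real.sqrt_mul_self (norm_nonneg _)]
    rw [Function.comp_def] at hcomp
    rw [hfun] at hcomp
    refine HasFDerivAt.congr_fderiv hcomp ?_
    apply ContinuousLinearMap.ext
    intro v
    simp only [ContinuousLinearMap.smul_apply, ContinuousLinearMap.comp_apply,
      ContinuousLinearMap.prod_apply, fderivInnerCLM_apply,
      InnerProductSpace.toDual_apply_apply, smul_eq_mul]
    rw [hB, ContinuousLinearMap.adjoint_inner_left, hv₀, real_inner_smul_left,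
      real_inner_comm (A v) (gradient u x), hGG, Real.sqrt_mul_self (norm_nonneg _)]
    field_simp
    ring
  have hgradnorm : gradient (fun y => ‖gradient u y‖) x = B v₀ := hGradAt.gradient
  refine ⟨hnormdiff, ?_⟩
  intro ι _ e
  have hioned : ∀ v w : EuclideanSpace ℂ (Fin n), iteratedFDeriv ℝ 2 u x ![v, w] = ⟪A v, w⟫ := by
    intro v w
    rw [iteratedFDeriv_two_apply]
    have hfd2 : fderiv ℝ (fderiv ℝ u) x = Φ.comp (Fc.restrictScalars ℝ) := by
      rw [hfdu]
      exact (Φ.hasFDerivAt.comp x (hgF.restrictScalars ℝ)).fderiv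
    rw [hfd2, keyinner v w]
    rfl
  have hABswap : ∀ i j : ι, ⟪A (e i), e j⟫ = ⟪B (e j), e i⟫ := by
    intro i j
    rw [hB, ContinuousLinearMap.adjoint_inner_left, real_inner_comm]
  have hsum : ∑ i, ∑ j, (iteratedFDeriv ℝ 2 u x ![e i, e j]) ^ 2
      = ∑ i, ∑ j, ⟪B (e i), e j⟫ ^ 2 := by
    calc ∑ i, ∑ j, (iteratedFDeriv ℝ 2 u x ![e i, e j]) ^ 2
        = ∑ i, ∑ j, ⟪A (e i), e j⟫ ^ 2 := by
          congr 1; funext i; congr 1; funext j; rw [hioned]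
      _ = ∑ i, ∑ j, ⟪B (e j), e i⟫ ^ 2 := by
          congr 1; funext i; congr 1; funext j; rw [hABswap]
      _ = ∑ i, ∑ j, ⟪B (e i), e j⟫ ^ 2 := Finset.sum_comm
  have hhs := hs_ineq e B v₀ v₁ hv₀n hv₁n hv01
  have hBv1 : ‖B v₁‖ = ‖B v₀‖ := by
    rw [hv₁, hBanti, norm_neg, norm_smul, Complex.norm_I, one_mul]
  rw [hgradnorm, hsum]
  rw [hBv1] at hhs
  linarith
end
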